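/- arXiv:1204.0647 — 3 statements merged into one kernel-verified Lean document; each statement's English description precedes it below -/
import Mathlib

section
/- Let G be a graph of maximum degree Δ₁ and let H be a graph of order n₂. Then Δ₁ + n₂ + 1 ≤ χ_{≤2}(G⊙H) ≤ χ_{≤2}(G) + n₂. -/
open SimpleGraph

/-- The corona product `G ⊙ H`: one copy of `G` together with one copy of `H`
for each vertex of `G`, where the `i`-th vertex of `G` is joined by an edge to
every vertex of the `i`-th copy of `H`. -/
def corona {α β : Type*} (G : SimpleGraph α) (H : SimpleGraph β) :
    SimpleGraph (α ⊕ α × β) where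
  Adj x y :=
    match x, y with
    | Sum.inl u, Sum.inl v => G.Adj u v
    | Sum.inl u, Sum.inr q => u = q.1
    | Sum.inr p, Sum.inl v => p.1 = v
    | Sum.inr p, Sum.inr q => p.1 = q.1 ∧ H.Adj p.2 q.2
  symm := ⟨by
    rintro (u | p) (v | q) h
    · exact h.symm
    · exact h.symm
    · exact h.symm
    · exact ⟨h.1.symm, h.2.symm⟩⟩
  loopless := ⟨by
    rintro (u | p) h
    · exact G.irrefl h
    · exact H.irrefl h.2⟩

/-- `G` admits a coloring with `n` colors in which any two distinct vertices at
distance at most `k` (i.e. joined by a walk of length at most `k`) get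
distinct colors. -/
def DistKColorable {α : Type*} (G : SimpleGraph α) (k n : ℕ) : Prop :=
  ∃ c : α → Fin n, ∀ u v : α, u ≠ v → (∃ w : G.Walk u v, w.length ≤ k) → c u ≠ c v

/-- The distance-`k` chromatic number of `G`. -/
noncomputable def distChromaticNumber {α : Type*} (G : SimpleGraph α) (k : ℕ) : ℕ :=
  sInf {n | DistKColorable G k n}

/-!
In `G ⊙ H`, a vertex `u` of `G` of maximum degree has `Δ₁ + n₂` neighbours (its neighbours in `G`
and its copy of `H`), and any two vertices of its closed neighbourhood are at distance at most
two, which forces `Δ₁ + n₂ + 1` colors. Conversely, a walk of length at most two between two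
vertices of `G` that leaves `G` must return to its start, so a distance-2 coloring of `G` can
be kept on the copy of `G`; two vertices of the copies of `H` at distance at most two lie in the
same copy, so `n₂` fresh colors, one for each vertex of `H`, complete the coloring.
-/

namespace SimpleGraph

variable {V : Type*} {G : SimpleGraph V}

theorem exists_walk_length_le_two_iff {u v : V} :
    (∃ w : G.Walk u v, w.length ≤ 2) ↔ u = v ∨ G.Adj u v ∨ ∃ x, G.Adj u x ∧ G.Adj x v := by
  constructor
  · rintro ⟨_ | ⟨h₁, _ | ⟨h₂, _ | ⟨_, _⟩⟩⟩, hw⟩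
    · exact .inl rfl
    · exact .inr (.inl h₁)
    · exact .inr (.inr ⟨_, h₁, h₂⟩)
    · simp at hw
  · rintro (rfl | h | ⟨x, h₁, h₂⟩)
    · exact ⟨.nil, by simp⟩
    · exact ⟨h.toWalk, by simp⟩
    · exact ⟨.cons h₁ h₂.toWalk, by simp⟩

end SimpleGraph

theorem distKColorable_card {V : Type*} [Fintype V] (G : SimpleGraph V) (k : ℕ) :
    DistKColorable G k (Fintype.card V) :=
  ⟨Fintype.equivFin V, fun _ _ huv _ h => huv ((Fintype.equivFin V).injective h)⟩

theorem distKColorable_distChromaticNumber {V : Type*} [Fintype V] (G : SimpleGraph V) (k : ℕ) :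
    DistKColorable G k (distChromaticNumber G k) :=
  Nat.sInf_mem (s := {n | DistKColorable G k n}) ⟨_, distKColorable_card G k⟩

theorem distChromaticNumber_le {V : Type*} {G : SimpleGraph V} {k n : ℕ}
    (h : DistKColorable G k n) : distChromaticNumber G k ≤ n :=
  Nat.sInf_le h

/-- Any two vertices of a closed neighbourhood are at distance at most two, so a distance-`k`
coloring is injective on it. -/
theorem DistKColorable.degree_lt {V : Type*} {G : SimpleGraph V} {k n : ℕ} (hk : 2 ≤ k)
    (h : DistKColorable G k n) (v : V) [Fintype (G.neighborSet v)] : G.degree v < n := by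
  obtain ⟨c, hc⟩ := h
  let f : Option (G.neighborSet v) → V := fun x => x.elim v Subtype.val
  have walk_to_v : ∀ x, ∃ w : G.Walk (f x) v, w.length ≤ 1 := by
    rintro (_ | ⟨x, hx⟩)
    · exact ⟨Walk.nil, zero_le_one⟩
    · exact ⟨Adj.toWalk (G.adj_symm hx), le_rfl⟩
  have f_inj : Function.Injective f := by
    rintro (_ | ⟨x, hx⟩) (_ | ⟨y, hy⟩) hxy
    · rfl
    · exact absurd hxy (G.ne_of_adj hy)
    · exact absurd hxy (G.ne_of_adj hx).symm
    · exact congrArg some (Subtype.ext hxy)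
  have cf_inj : Function.Injective (c ∘ f) := by
    intro x y hxy
    by_contra hne
    obtain ⟨wx, hwx⟩ := walk_to_v x
    obtain ⟨wy, hwy⟩ := walk_to_v y
    refine hc _ _ (f_inj.ne hne) ⟨wx.append wy.reverse, ?_⟩ hxy
    simp only [Walk.length_append, Walk.length_reverse]
    omega
  simpa [← card_neighborSet_eq_degree] using Fintype.card_le_of_injective _ cf_inj

section Corona

variable {α β : Type*} (G : SimpleGraph α) (H : SimpleGraph β)

def coronaNeighborSetInlEquiv (u : α) :
    (corona G H).neighborSet (Sum.inl u) ≃ G.neighborSet u ⊕ β where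
  toFun
    | ⟨Sum.inl v, h⟩ => Sum.inl ⟨v, h⟩
    | ⟨Sum.inr p, _⟩ => Sum.inr p.2
  invFun
    | Sum.inl ⟨v, h⟩ => ⟨Sum.inl v, h⟩
    | Sum.inr b => ⟨Sum.inr (u, b), rfl⟩
  left_inv := by
    rintro ⟨_ | ⟨w, b⟩, h⟩
    · rfl
    · change u = w at h
      subst h
      rfl
  right_inv := by
    rintro (⟨_, _⟩ | _) <;> rfl

theorem corona_degree_inl [Fintype β] {u : α} [Fintype (G.neighborSet u)]
    [Fintype ((corona G H).neighborSet (Sum.inl u))] :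
    (corona G H).degree (Sum.inl u) = G.degree u + Fintype.card β := by
  rw [← card_neighborSet_eq_degree, ← card_neighborSet_eq_degree, ← Fintype.card_sum]
  exact Fintype.card_congr (coronaNeighborSetInlEquiv G H u)

theorem corona_exists_walk_inl {u v : α} (huv : u ≠ v)
    (h : ∃ w : (corona G H).Walk (Sum.inl u) (Sum.inl v), w.length ≤ 2) :
    ∃ w : G.Walk u v, w.length ≤ 2 := by
  rw [exists_walk_length_le_two_iff] at h ⊢
  rcases h with h | h | ⟨_ | q, h₁, h₂⟩
  · exact absurd (Sum.inl_injective h) huv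
  · exact .inr (.inl h)
  · exact .inr (.inr ⟨_, h₁, h₂⟩)
  · exact absurd ((h₁ : u = q.1).trans h₂) huv

theorem corona_fst_eq_of_exists_walk {p q : α × β}
    (h : ∃ w : (corona G H).Walk (Sum.inr p) (Sum.inr q), w.length ≤ 2) : p.1 = q.1 := by
  rw [exists_walk_length_le_two_iff] at h
  rcases h with h | h | ⟨_ | r, h₁, h₂⟩
  · rw [Sum.inr_injective h]
  · exact h.1
  · exact (h₁ : p.1 = _).trans h₂
  · exact (h₁ : p.1 = r.1 ∧ _).1.trans (h₂ : r.1 = q.1 ∧ _).1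

theorem DistKColorable.corona [Fintype β] {m : ℕ} (hm : DistKColorable G 2 m) :
    DistKColorable (corona G H) 2 (m + Fintype.card β) := by
  obtain ⟨c, hc⟩ := hm
  refine ⟨finSumFinEquiv ∘ Sum.map c (Fintype.equivFin β ∘ Prod.snd), ?_⟩
  rintro (u | p) (v | q) hne hwalk hcol <;>
    simp only [Function.comp_apply, finSumFinEquiv.injective.eq_iff, Sum.map_inl, Sum.map_inr,
      Sum.inl.injEq, Sum.inr.injEq, reduceCtorEq] at hcol
  · have huv : u ≠ v := fun h => hne (congrArg Sum.inl h)
    exact hc u v huv (corona_exists_walk_inl G H huv hwalk) hcol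
  · exact hne (congrArg Sum.inr (Prod.ext (corona_fst_eq_of_exists_walk G H hwalk)
      ((Fintype.equivFin β).injective hcol)))

end Corona

/-- Let `G` be a graph of maximum degree `Δ₁` and `H` a graph of order `n₂`.
Then `Δ₁ + n₂ + 1 ≤ χ_{≤2}(G ⊙ H) ≤ χ_{≤2}(G) + n₂`. -/
theorem stmt_2 {α β : Type*} [Fintype α] [Fintype β] [Nonempty α]
    (G : SimpleGraph α) [DecidableRel G.Adj] (H : SimpleGraph β) :
    G.maxDegree + Fintype.card β + 1 ≤ distChromaticNumber (corona G H) 2 ∧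
      distChromaticNumber (corona G H) 2 ≤ distChromaticNumber G 2 + Fintype.card β := by
  classical
  refine ⟨?_, distChromaticNumber_le ((distKColorable_distChromaticNumber G 2).corona G H)⟩
  obtain ⟨u, hu⟩ := G.exists_maximal_degree_vertex
  have := (distKColorable_distChromaticNumber (corona G H) 2).degree_lt le_rfl (Sum.inl u)
  rw [corona_degree_inl] at this
  omega
end

section
/- Let H be a graph of order n₂ and let T = (V,E) be a tree. Let Δ_{ij}(T) = max{δ(v_l) + δ(v_r) : v_l, v_r ∈ V, v_l adjacent to v_r} be the maximum sum of degrees over adjacent pairs of vertices of T. Then χ_{≤3}(T⊙H) = 2n₂ + Δ_{ij}(T). -/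
/-!
Lower bound: for an edge `uv` of maximal degree sum, the neighbourhoods of `u` and `v` (disjoint,
since a tree has no triangle) together with the copies of `H` at `u` and `v` are pairwise at
distance at most `3` in `T ⊙ H`, so they need `2 n₂ + Δij` colours.

Upper bound: a vertex of a copy of `H` is within distance `3` only of tree vertices, of its own
copy and of the copies at adjacent vertices. So the copies share `2 n₂` colours, indexed by a proper
2-colouring of `T` and the vertex of `H`, and `T` takes `Δij` further colours from a distance-3
colouring. That one is greedy in order of distance from a root: the earlier vertices within
distance `3` of `v` are all adjacent to the parent `p` of `v` or to its parent `g`, hence number at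
most `δ(p) + δ(g) - 1 < Δij`.
-/

open SimpleGraph

open Finset

namespace SimpleGraph

variable {V : Type*} {G : SimpleGraph V}

def power (G : SimpleGraph V) (k : ℕ) : SimpleGraph V where
  Adj u v := u ≠ v ∧ ∃ w : G.Walk u v, w.length ≤ k
  symm := ⟨fun _ _ ⟨huv, w, hw⟩ => ⟨huv.symm, w.reverse, by rwa [Walk.length_reverse]⟩⟩
  loopless := ⟨fun _ h => h.1 rfl⟩

@[simp]
theorem power_adj {k : ℕ} {u v : V} :
    (G.power k).Adj u v ↔ u ≠ v ∧ ∃ w : G.Walk u v, w.length ≤ k :=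
  Iff.rfl

theorem distKColorable_iff_colorable_power {k n : ℕ} :
    DistKColorable G k n ↔ (G.power k).Colorable n :=
  ⟨fun ⟨c, hc⟩ => ⟨Coloring.mk c fun h => hc _ _ (power_adj.mp h).1 (power_adj.mp h).2⟩,
    fun ⟨C⟩ => ⟨C, fun _ _ huv hw => C.valid (power_adj.mpr ⟨huv, hw⟩)⟩⟩

theorem colorable_of_card_filter_adj_lt [Fintype V] [DecidableRel G.Adj] {α : Type*}
    [LinearOrder α] (f : V → α) (hf : Function.Injective f) {n : ℕ}
    (h : ∀ v, (univ.filter fun w => G.Adj v w ∧ f w < f v).card < n) : G.Colorable n := by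
  classical
  suffices ∀ s : Finset V, ∃ c : V → ℕ, (∀ u ∈ s, c u < n) ∧
      ∀ u ∈ s, ∀ v ∈ s, G.Adj u v → c u ≠ c v by
    obtain ⟨c, hlt, hc⟩ := this univ
    exact ⟨Coloring.mk (fun v => ⟨c v, hlt v (mem_univ v)⟩)
      fun huv heq => hc _ (mem_univ _) _ (mem_univ _) huv (Fin.val_eq_of_eq heq)⟩
  intro s
  induction s using Finset.induction_on_max_value f with
  | empty => exact ⟨0, by simp, by simp⟩
  | insert a s ha hmax ih =>
    obtain ⟨c, hlt, hc⟩ := ih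
    have hearlier : s.filter (G.Adj a) ⊆ univ.filter fun w => G.Adj a w ∧ f w < f a :=
      fun w hw => by
        obtain ⟨hws, haw⟩ := mem_filter.mp hw
        exact mem_filter.mpr ⟨mem_univ w, haw,
          (hmax w hws).lt_of_ne fun hfw => ha (hf hfw ▸ hws)⟩
    have hused : ((s.filter (G.Adj a)).image c).card < (range n).card := by
      simpa using card_image_le.trans_lt ((card_le_card hearlier).trans_lt (h a))
    obtain ⟨k, hk, hknew⟩ := exists_mem_notMem_of_card_lt_card hused
    have hfresh : ∀ v ∈ s, G.Adj a v → c v ≠ k := fun v hv hav hck =>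
      hknew (mem_image.mpr ⟨v, mem_filter.mpr ⟨hv, hav⟩, hck⟩)
    have hold : ∀ v ∈ s, Function.update c a k v = c v := fun v hv =>
      Function.update_of_ne (ne_of_mem_of_not_mem hv ha) _ _
    refine ⟨Function.update c a k, fun u hu => ?_, fun u hu v hv huv => ?_⟩
    · rcases mem_insert.mp hu with rfl | hu
      · simpa using hk
      · simpa [hold u hu] using hlt u hu
    · rcases mem_insert.mp hu with hua | hus <;> rcases mem_insert.mp hv with hva | hvs
      · exact absurd (hua.trans hva.symm) huv.ne
      · rw [hua] at huv ⊢
        simpa [hold v hvs] using (hfresh v hvs huv).symm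
      · rw [hva] at huv ⊢
        simpa [hold u hus] using hfresh u hus huv.symm
      · simpa [hold u hus, hold v hvs] using hc u hus v hvs huv

theorem isClique_power_three_of_forall_adj {u v : V}
    (huv : G.Adj u v) {s : Set V} (hs : ∀ x ∈ s, G.Adj x u ∨ G.Adj x v) :
    (G.power 3).IsClique s := by
  have hnear : ∀ x ∈ s, ∃ z, (z = u ∨ z = v) ∧ G.Adj x z := fun x hx => by
    rcases hs x hx with h | h
    exacts [⟨u, .inl rfl, h⟩, ⟨v, .inr rfl, h⟩]
  have hedge : ∀ z z', (z = u ∨ z = v) → (z' = u ∨ z' = v) →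
      ∃ q : G.Walk z z', q.length ≤ 1 := by
    rintro z z' (rfl | rfl) (rfl | rfl)
    exacts [⟨.nil, by simp⟩, ⟨huv.toWalk, by simp⟩, ⟨huv.symm.toWalk, by simp⟩, ⟨.nil, by simp⟩]
  intro x hx y hy hxy
  obtain ⟨z, hz, hxz⟩ := hnear x hx
  obtain ⟨z', hz', hyz'⟩ := hnear y hy
  obtain ⟨q, hq⟩ := hedge z z' hz hz'
  refine power_adj.mpr ⟨hxy, .cons hxz (q.append hyz'.symm.toWalk), ?_⟩
  simp only [Walk.length_cons, Walk.length_append, Walk.length_nil]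
  omega

end SimpleGraph

namespace SimpleGraph.IsTree

variable {V : Type*} {T : SimpleGraph V} (hT : T.IsTree) (r : V)
include hT

theorem mem_support_of_adj_of_dist_add_one {v p : V} {P : T.Walk r v} (hP : P.IsPath)
    (hpv : T.Adj p v) (hdp : T.dist r p + 1 = T.dist r v) : p ∈ P.support := by
  classical
  obtain ⟨Q, hQ, hQl⟩ := hT.connected.exists_path_of_dist r p
  refine hT.isAcyclic.mem_support_of_ne_mem_support_of_adj_of_isPath hP hQ hpv.symm fun hv => ?_
  have := (dist_le (Q.takeUntil v hv)).trans (Q.length_takeUntil_le_length hv)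
  omega

theorem eq_of_adj_of_dist_add_one {v p q : V} (hpv : T.Adj p v) (hqv : T.Adj q v)
    (hdp : T.dist r p + 1 = T.dist r v) (hdq : T.dist r q + 1 = T.dist r v) : p = q := by
  obtain ⟨P, hP, -⟩ := hT.connected.exists_path_of_dist r v
  rw [hT.isAcyclic.eq_penultimate_of_adj_end hP hpv.symm
      (hT.mem_support_of_adj_of_dist_add_one r hP hpv hdp),
    hT.isAcyclic.eq_penultimate_of_adj_end hP hqv.symm
      (hT.mem_support_of_adj_of_dist_add_one r hP hqv hdq)]

theorem exists_adj_dist_add_one {v : V} (hv : T.dist r v ≠ 0) :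
    ∃ p, T.Adj p v ∧ T.dist r p + 1 = T.dist r v := by
  obtain ⟨P, -, hPl⟩ := hT.connected.exists_path_of_dist r v
  have hP : ¬P.Nil := fun h => hv (hPl ▸ h.length_eq_zero)
  refine ⟨P.penultimate, P.adj_penultimate hP, ?_⟩
  have := dist_le P.dropLast
  have := P.length_dropLast_add_one hP
  rcases hT.dist_eq_dist_add_one_of_adj r (P.adj_penultimate hP) <;> omega

theorem dist_eq_add_length_of_isPath_cons {x y w : V} (hxy : T.Adj x y)
    (hdxy : T.dist r x + 1 = T.dist r y) (W : T.Walk y w) (hW : (Walk.cons hxy W).IsPath) :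
    T.dist r w = T.dist r y + W.length := by
  induction W generalizing x with
  | nil => simp
  | @cons y z w hyz W ih =>
    -- `x` is the only neighbour of `y` nearer the root, and the path cannot return to it.
    have hdyz : T.dist r y + 1 = T.dist r z := by
      rcases hT.dist_eq_dist_add_one_of_adj r hyz with h | h
      · have hzx := hT.eq_of_adj_of_dist_add_one r hyz.symm hxy h.symm hdxy
        have hx : x ∈ (Walk.cons hyz W).support := by simp [← hzx]
        exact absurd hx ((Walk.cons_isPath_iff _ _).mp hW).2
      · exact h.symm
    rw [ih hyz hdyz hW.of_cons, Walk.length_cons]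
    omega

/-- Every vertex `w ≠ v` within distance `3` of `v` and not farther from the root than `v` is
adjacent to the parent `p` of `v` or to the parent `g` of `p` (to `g := v` if `p` is the root). -/
theorem exists_adj_adj_forall_dist_le_three [Nontrivial V] (v : V) :
    ∃ p g, T.Adj v p ∧ T.Adj p g ∧ ∀ w, w ≠ v → T.dist r w ≤ T.dist r v →
      T.dist v w ≤ 3 → T.Adj p w ∨ T.Adj g w := by
  by_cases hv : T.dist r v = 0
  · obtain ⟨p, hvp⟩ := hT.connected.preconnected.exists_adj_of_nontrivial v
    refine ⟨p, v, hvp, hvp.symm, fun w hwv hdw _ => absurd ?_ hwv⟩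
    exact (hT.connected.dist_eq_zero_iff.mp (by omega : T.dist r w = 0)).symm.trans
      (hT.connected.dist_eq_zero_iff.mp hv)
  obtain ⟨p, hpv, hdp⟩ := hT.exists_adj_dist_add_one r hv
  obtain ⟨g, hpg, hg⟩ : ∃ g, T.Adj p g ∧
      ∀ y, T.Adj y p → T.dist r y + 1 = T.dist r p → y = g := by
    by_cases hp : T.dist r p = 0
    · exact ⟨v, hpv, fun y _ hy => by omega⟩
    · obtain ⟨g, hgp, hdg⟩ := hT.exists_adj_dist_add_one r hp
      exact ⟨g, hgp.symm, fun y hyp hdy => hT.eq_of_adj_of_dist_add_one r hyp hgp hdy hdg⟩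
  refine ⟨p, g, hpv.symm, hpg, fun w hwv hdw hvw => ?_⟩
  obtain ⟨P, hP, hPl⟩ := hT.connected.exists_path_of_dist v w
  cases P with
  | nil => exact absurd rfl hwv
  | @cons _ x _ hvx P =>
    obtain rfl : x = p := by
      rcases hT.dist_eq_dist_add_one_of_adj r hvx with h | h
      · exact hT.eq_of_adj_of_dist_add_one r hvx.symm hpv h.symm hdp
      · have := hT.dist_eq_add_length_of_isPath_cons r hvx h.symm P hP
        omega
    cases P with
    | nil => exact Or.inr hpg.symm
    | @cons _ y _ hxy P =>
      rcases hT.dist_eq_dist_add_one_of_adj r hxy with h | h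
      · obtain rfl := hg y hxy.symm h.symm
        cases P with
        | nil => exact Or.inl hxy
        | @cons _ z _ hyz P =>
          have hP0 : P.length = 0 := by simp only [Walk.length_cons] at hPl; omega
          exact Or.inr (Walk.eq_of_length_eq_zero hP0 ▸ hyz)
      · have := hT.dist_eq_add_length_of_isPath_cons r hxy h.symm P hP.of_cons
        exact Or.inl (Walk.eq_of_length_eq_zero (by omega : P.length = 0) ▸ hxy)

theorem card_filter_dist_le_three_lt [Fintype V] [DecidableEq V] [DecidableRel T.Adj]
    [Nontrivial V] {Δ : ℕ} (hΔ : ∀ u v, T.Adj u v → T.degree u + T.degree v ≤ Δ) (v : V) :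
    (univ.filter fun w => w ≠ v ∧ T.dist v w ≤ 3 ∧ T.dist r w ≤ T.dist r v).card < Δ := by
  obtain ⟨p, g, hvp, hpg, hcover⟩ := hT.exists_adj_adj_forall_dist_le_three r v
  have hsub : (univ.filter fun w => w ≠ v ∧ T.dist v w ≤ 3 ∧ T.dist r w ≤ T.dist r v) ⊆
      (T.neighborFinset p ∪ T.neighborFinset g).erase v := fun w hw => by
    obtain ⟨-, hwv, hvw, hdw⟩ := mem_filter.mp hw
    simpa [hwv] using hcover w hwv hdw hvw
  have hdeg := hΔ p g hpg
  have hpos : 0 < T.degree p := T.degree_pos_iff_exists_adj p |>.mpr ⟨v, hvp.symm⟩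
  calc _ ≤ ((T.neighborFinset p ∪ T.neighborFinset g).erase v).card := card_le_card hsub
    _ = (T.neighborFinset p ∪ T.neighborFinset g).card - 1 :=
      card_erase_of_mem (mem_union_left _ ((T.mem_neighborFinset p v).mpr hvp.symm))
    _ ≤ T.degree p + T.degree g - 1 := by
      have := card_union_le (T.neighborFinset p) (T.neighborFinset g)
      simp only [card_neighborFinset_eq_degree] at this
      omega
    _ < Δ := by omega

theorem colorable_power_three [Fintype V] [DecidableRel T.Adj] [Nontrivial V] {Δ : ℕ}
    (hΔ : ∀ u v, T.Adj u v → T.degree u + T.degree v ≤ Δ) : (T.power 3).Colorable Δ := by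
  classical
  obtain ⟨r⟩ := hT.connected.nonempty
  let e := Fintype.equivFin V
  refine colorable_of_card_filter_adj_lt (fun v => toLex (T.dist r v, e v))
    (fun a b hab => e.injective (congrArg (fun x => (ofLex x).2) hab))
    fun v => (card_le_card fun w hw => ?_).trans_lt (hT.card_filter_dist_le_three_lt r hΔ v)
  obtain ⟨-, ⟨hwv, W, hW⟩, hlt⟩ := mem_filter.mp hw
  exact mem_filter.mpr ⟨mem_univ w, hwv.symm, (dist_le W).trans hW,
    (Prod.Lex.toLex_lt_toLex'.mp hlt).1⟩

end SimpleGraph.IsTree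

section Corona

variable {α β : Type*} {G : SimpleGraph α} {H : SimpleGraph β}

def coronaBase : α ⊕ α × β → α := Sum.elim id Prod.fst

def coronaLevel : α ⊕ α × β → ℕ := Sum.elim (fun _ => 0) (fun _ => 1)

theorem corona_adj_inl_inl {u v : α} : (corona G H).Adj (.inl u) (.inl v) ↔ G.Adj u v :=
  Iff.rfl

theorem corona_adj_inr_inl {a : α} {b : β} : (corona G H).Adj (.inr (a, b)) (.inl a) :=
  rfl

theorem corona_adj_base {x y : α ⊕ α × β} (h : (corona G H).Adj x y) :
    coronaBase x = coronaBase y ∨ ∃ u v, x = .inl u ∧ y = .inl v ∧ G.Adj u v := by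
  rcases x with u | ⟨a, b⟩ <;> rcases y with v | ⟨a', b'⟩
  · exact .inr ⟨u, v, rfl, rfl, h⟩
  · exact .inl h
  · exact .inl h
  · exact .inl h.1

theorem coronaLevel_le_length {v : α} {y : α ⊕ α × β} (w : (corona G H).Walk (.inl v) y) :
    coronaLevel y ≤ w.length := by
  rcases y with u | q
  · exact Nat.zero_le _
  · exact Nat.one_le_iff_ne_zero.mpr fun h => Sum.inl_ne_inr (Walk.eq_of_length_eq_zero h)

/-- Steps inside a copy of `H` or to its base vertex project to nothing, and a walk ending in a
copy of `H` away from its base vertex spends one such step at that end. -/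
theorem exists_walk_base_of_corona_walk {x y : α ⊕ α × β} (w : (corona G H).Walk x y)
    (hxy : coronaBase x ≠ coronaBase y) :
    ∃ p : G.Walk (coronaBase x) (coronaBase y),
      coronaLevel x + p.length + coronaLevel y ≤ w.length := by
  induction w with
  | nil => exact absurd rfl hxy
  | @cons x z y hxz w ih =>
    rcases corona_adj_base hxz with hbase | ⟨u, v, rfl, rfl, huv⟩
    · obtain ⟨p, hp⟩ := ih (hbase ▸ hxy)
      refine ⟨p.copy hbase.symm rfl, ?_⟩
      have : coronaLevel x ≤ 1 := by rcases x <;> simp [coronaLevel]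
      simp only [Walk.length_copy, Walk.length_cons]
      omega
    · by_cases hvy : v = coronaBase y
      · refine ⟨(hvy ▸ huv : G.Adj u (coronaBase y)).toWalk, ?_⟩
        have := coronaLevel_le_length w
        change 0 + 1 + _ ≤ w.length + 1
        omega
      · obtain ⟨p, hp⟩ := ih hvy
        refine ⟨.cons huv p, ?_⟩
        change 0 + (p.length + 1) + _ ≤ w.length + 1
        change 0 + _ + _ ≤ _ at hp
        omega

variable [Fintype β]

theorem colorable_power_three_corona {n : ℕ} (h2 : G.Colorable 2)
    (h3 : (G.power 3).Colorable n) :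
    ((corona G H).power 3).Colorable (2 * Fintype.card β + n) := by
  obtain ⟨c2⟩ := h2
  obtain ⟨c3⟩ := h3
  let C : ((corona G H).power 3).Coloring ((Fin 2 × β) ⊕ Fin n) :=
    Coloring.mk (Sum.elim (fun u => .inr (c3 u)) (fun q => .inl (c2 q.1, q.2))) <| by
      rintro (u | ⟨a, b⟩) (v | ⟨a', b'⟩) ⟨hne, w, hw⟩
      · have huv : u ≠ v := fun h => hne (congrArg _ h)
        obtain ⟨p, hp⟩ := exists_walk_base_of_corona_walk w huv
        have hp3 : p.length ≤ 3 := by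
          change 0 + p.length + 0 ≤ w.length at hp
          omega
        simpa using c3.valid (power_adj.mpr ⟨huv, p, hp3⟩)
      · simp
      · simp
      · by_cases haa : a = a'
        · subst haa
          have hbb : b ≠ b' := fun h => hne (h ▸ rfl)
          simpa using hbb
        · obtain ⟨p, hp⟩ := exists_walk_base_of_corona_walk w haa
          change 1 + p.length + 1 ≤ w.length at hp
          have hadj : G.Adj a a' := dist_eq_one_iff_adj.mp <| by
            have h1 : G.dist a a' ≤ p.length := dist_le p
            have h2 : 0 < G.dist a a' := p.reachable.pos_dist_of_ne haa
            omega
          simpa using fun h _ => c2.valid hadj h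
  simpa using C.colorable

theorem le_of_distKColorable_corona_three [Fintype α] [DecidableRel G.Adj]
    (hG : G.CliqueFree 3) {u v : α} (huv : G.Adj u v) {n : ℕ}
    (hn : DistKColorable (corona G H) 3 n) :
    2 * Fintype.card β + (G.degree u + G.degree v) ≤ n := by
  classical
  let S : Finset (α ⊕ α × β) :=
    (G.neighborFinset u ∪ G.neighborFinset v).disjSum ({u, v} ×ˢ univ)
  have hclique : ((corona G H).power 3).IsClique (S : Set (α ⊕ α × β)) := by
    refine isClique_power_three_of_forall_adj (corona_adj_inl_inl.mpr huv) fun x hx => ?_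
    rcases mem_disjSum.mp hx with ⟨a, ha, rfl⟩ | ⟨⟨a, b⟩, hab, rfl⟩
    · simpa [corona_adj_inl_inl, adj_comm] using ha
    · rcases mem_insert.mp (mem_product.mp hab).1 with rfl | h
      · exact .inl corona_adj_inr_inl
      · exact .inr (mem_singleton.mp h ▸ corona_adj_inr_inl)
  have hdisj : Disjoint (G.neighborFinset u) (G.neighborFinset v) :=
    disjoint_left.mpr fun w hu hv => hG {u, v, w} <| is3Clique_triple_iff.mpr
      ⟨huv, (G.mem_neighborFinset u w).mp hu, (G.mem_neighborFinset v w).mp hv⟩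
  have hcard : S.card = 2 * Fintype.card β + (G.degree u + G.degree v) := by
    simp only [S, card_disjSum, card_union_of_disjoint hdisj, card_neighborFinset_eq_degree,
      card_product, card_pair huv.ne, card_univ]
    ring
  rw [distKColorable_iff_colorable_power] at hn
  exact hcard ▸ hclique.card_le_of_colorable hn

end Corona

/-- Let `H` be a graph of order `n₂` and let `T` be a tree. If
`Δij = max { δ(u) + δ(v) : u, v adjacent vertices of T }`, then
`χ_{≤3}(T ⊙ H) = 2 n₂ + Δij`. -/
theorem stmt_6 {V β : Type*} [Fintype V] [Fintype β]
    (T : SimpleGraph V) [DecidableRel T.Adj] (H : SimpleGraph β)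
    (hT : T.IsTree) (Δij : ℕ)
    (hΔ : IsGreatest {d : ℕ | ∃ u v : V, T.Adj u v ∧ d = T.degree u + T.degree v} Δij) :
    distChromaticNumber (corona T H) 3 = 2 * Fintype.card β + Δij := by
  obtain ⟨⟨u, v, huv, rfl⟩, hmax⟩ := hΔ
  have : Nontrivial V := ⟨u, v, huv.ne⟩
  have hupper : DistKColorable (corona T H) 3 (2 * Fintype.card β + (T.degree u + T.degree v)) :=
    distKColorable_iff_colorable_power.mpr <| colorable_power_three_corona
      hT.isAcyclic.colorable_two (hT.colorable_power_three fun a b hab => hmax ⟨a, b, hab, rfl⟩)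
  exact IsLeast.csInf_eq ⟨hupper, fun n hn =>
    le_of_distKColorable_corona_three (hT.isAcyclic.cliqueFree le_rfl) huv hn⟩
end

section
/- Let H be a graph such that for every locating-dominating set B of minimum cardinality in H there exists a vertex u ∉ B with N(u) ∩ B = B. Then γ_{l-d}(K₁⊙H) = γ_{l-d}(H) + 1. -/
open SimpleGraph

/-- `D` is a dominating set of `G`: every vertex outside `D` has a neighbor in `D`. -/
def IsDominatingSet {α : Type*} (G : SimpleGraph α) (D : Set α) : Prop :=
  ∀ v ∉ D, ∃ u ∈ D, G.Adj v u

/-- The domination number of `G`. -/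
noncomputable def dominationNumber {α : Type*} (G : SimpleGraph α) : ℕ :=
  sInf {n | ∃ D : Set α, IsDominatingSet G D ∧ D.ncard = n}

/-- `D` is a locating-dominating set of `G`: it is dominating and distinct
vertices outside `D` have distinct neighborhoods within `D`. -/
def IsLocatingDominating {α : Type*} (G : SimpleGraph α) (D : Set α) : Prop :=
  IsDominatingSet G D ∧
    ∀ u ∉ D, ∀ v ∉ D, u ≠ v → {x ∈ D | G.Adj u x} ≠ {x ∈ D | G.Adj v x}

/-- The location-domination number of `G`. -/
noncomputable def locatingDominationNumber {α : Type*} (G : SimpleGraph α) : ℕ :=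
  sInf {n | ∃ D : Set α, IsLocatingDominating G D ∧ D.ncard = n}

/-!
Call `D` locating if distinct vertices outside `D` have distinct traces `N(v) ∩ D` (domination is
not required). Under the hypothesis on `H`, every locating set `B` of `H` has at least
`γ_{l-d}(H)` vertices. If `B` is not dominating, exactly one vertex `b₀` is undominated, so
`B ∪ {b₀}` is locating-dominating. Were it minimum, some `u` would be adjacent to all of it;
then `B ∪ {u}` would be minimum too, some `w` would be adjacent to all of it, and `u ≠ w` would
have the same trace `B` on `B`.

In `K₁ ⊙ H` a vertex of `H` has as trace on `D` the trace in `H` on the restriction `B` of `D`,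
plus the apex if `D` contains it, so `B` is locating whenever `D` is. If `D` contains the apex,
`|D| ≥ |B| + 1 ≥ γ_{l-d}(H) + 1`. Otherwise `B` also dominates, and if it were a minimum
locating-dominating set of `H`, the vertex adjacent to all of `B` would have the same trace `D` as
the apex. Conversely, the apex together with a minimum locating-dominating set of `H` is
locating-dominating in `K₁ ⊙ H`.
-/

def IsLocating {α : Type*} (G : SimpleGraph α) (D : Set α) : Prop :=
  ∀ u ∉ D, ∀ v ∉ D, u ≠ v → {x ∈ D | G.Adj u x} ≠ {x ∈ D | G.Adj v x}

section LocatingSets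

variable {α : Type*} {G : SimpleGraph α} {D E : Set α}

theorem IsLocating.mono (hD : IsLocating G D) (hDE : D ⊆ E) : IsLocating G E := by
  intro u hu v hv huv htrace
  refine hD u (fun h => hu (hDE h)) v (fun h => hv (hDE h)) huv ?_
  ext x
  have hx := Set.ext_iff.mp htrace x
  simp only [Set.mem_sep_iff] at hx ⊢
  constructor
  · exact fun ⟨hxD, hux⟩ => ⟨hxD, (hx.mp ⟨hDE hxD, hux⟩).2⟩
  · exact fun ⟨hxD, hvx⟩ => ⟨hxD, (hx.mpr ⟨hDE hxD, hvx⟩).2⟩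

theorem IsLocating.eq_of_forall_not_adj (hD : IsLocating G D) {u v : α} (hu : u ∉ D)
    (hv : v ∉ D) (hu' : ∀ x ∈ D, ¬ G.Adj u x) (hv' : ∀ x ∈ D, ¬ G.Adj v x) : u = v := by
  by_contra huv
  refine hD u hu v hv huv ?_
  rw [Set.sep_eq_empty_iff_mem_false.mpr hu', Set.sep_eq_empty_iff_mem_false.mpr hv']

theorem IsLocating.isDominatingSet_insert (hD : IsLocating G D) {a b₀ : α} (hb₀ : b₀ ∉ D)
    (hb₀' : ∀ x ∈ D, ¬ G.Adj b₀ x) (ha : a = b₀ ∨ G.Adj b₀ a) :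
    IsDominatingSet G (insert a D) := by
  intro v hv
  rw [Set.mem_insert_iff, not_or] at hv
  by_cases hvb₀ : v = b₀
  · subst hvb₀
    rcases ha with rfl | hadj
    · exact absurd rfl hv.1
    · exact ⟨a, Set.mem_insert a D, hadj⟩
  · by_contra! hno
    exact hvb₀ (hD.eq_of_forall_not_adj hv.2 hb₀
      (fun x hx => hno x (Set.mem_insert_of_mem a hx)) hb₀')

theorem isLocatingDominating_univ (G : SimpleGraph α) : IsLocatingDominating G Set.univ :=
  ⟨fun v hv => absurd (Set.mem_univ v) hv, fun u hu => absurd (Set.mem_univ u) hu⟩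

theorem exists_isLocatingDominating_ncard_eq (G : SimpleGraph α) :
    ∃ D : Set α, IsLocatingDominating G D ∧ D.ncard = locatingDominationNumber G := by
  have hne : {n | ∃ D : Set α, IsLocatingDominating G D ∧ D.ncard = n}.Nonempty :=
    ⟨_, Set.univ, isLocatingDominating_univ G, rfl⟩
  exact Nat.sInf_mem hne

theorem locatingDominationNumber_le_ncard (hD : IsLocatingDominating G D) :
    locatingDominationNumber G ≤ D.ncard :=
  Nat.sInf_le ⟨D, hD, rfl⟩

end LocatingSets

theorem locatingDominationNumber_le_ncard_of_isLocating {β : Type*} [Finite β]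
    {H : SimpleGraph β}
    (hH : ∀ B : Set β, IsLocatingDominating H B → B.ncard = locatingDominationNumber H →
      ∃ u ∉ B, {x ∈ B | H.Adj u x} = B)
    {B : Set β} (hB : IsLocating H B) : locatingDominationNumber H ≤ B.ncard := by
  by_cases hdom : IsDominatingSet H B
  · exact locatingDominationNumber_le_ncard ⟨hdom, hB⟩
  obtain ⟨b₀, hb₀, hb₀'⟩ : ∃ b₀ ∉ B, ∀ x ∈ B, ¬ H.Adj b₀ x := by
    simpa [IsDominatingSet] using hdom
  by_contra! hlt
  have minimum_insert : ∀ a ∉ B, (a = b₀ ∨ H.Adj b₀ a) →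
      ∃ u ∉ insert a B, ∀ x ∈ insert a B, H.Adj u x := by
    intro a ha hab₀
    have hld : IsLocatingDominating H (insert a B) :=
      ⟨hB.isDominatingSet_insert hb₀ hb₀' hab₀, hB.mono (Set.subset_insert a B)⟩
    have hcard := locatingDominationNumber_le_ncard hld
    rw [Set.ncard_insert_of_notMem ha] at hcard
    obtain ⟨u, hu, hu'⟩ := hH _ hld (by rw [Set.ncard_insert_of_notMem ha]; omega)
    exact ⟨u, hu, Set.sep_eq_self_iff_mem_true.mp hu'⟩
  obtain ⟨u, hu, hu'⟩ := minimum_insert b₀ hb₀ (Or.inl rfl)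
  obtain ⟨w, hw, hw'⟩ := minimum_insert u (fun h => hu (Set.mem_insert_of_mem b₀ h))
    (Or.inr (hu' b₀ (Set.mem_insert b₀ B)).symm)
  rw [Set.mem_insert_iff, not_or] at hu hw
  refine hB w hw.2 u hu.2 hw.1 ?_
  rw [Set.sep_eq_self_iff_mem_true.mpr (fun x hx => hw' x (Set.mem_insert_of_mem u hx)),
    Set.sep_eq_self_iff_mem_true.mpr (fun x hx => hu' x (Set.mem_insert_of_mem b₀ hx))]

namespace CoronaK₁

variable {β : Type*} {H : SimpleGraph β}

local notation "K₁⊙" H:max => corona (⊥ : SimpleGraph (Fin 1)) H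

variable (β) in
def apex : Fin 1 ⊕ Fin 1 × β := Sum.inl 0

def vertex (b : β) : Fin 1 ⊕ Fin 1 × β := Sum.inr (0, b)

theorem vertex_injective : Function.Injective (vertex (β := β)) := by
  intro b b' h
  simpa [vertex] using h

@[simp]
theorem vertex_ne_apex (b : β) : vertex b ≠ apex β := Sum.inr_ne_inl

theorem eq_apex_or_eq_vertex (x : Fin 1 ⊕ Fin 1 × β) : x = apex β ∨ ∃ b, x = vertex b := by
  rcases x with i | ⟨i, b⟩ <;> obtain rfl := Subsingleton.elim i 0
  exacts [Or.inl rfl, Or.inr ⟨b, rfl⟩]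

theorem forall_iff {p : Fin 1 ⊕ Fin 1 × β → Prop} :
    (∀ x, p x) ↔ p (apex β) ∧ ∀ b, p (vertex b) :=
  ⟨fun h => ⟨h _, fun b => h _⟩, fun ⟨happex, hvertex⟩ x => by
    rcases eq_apex_or_eq_vertex x with rfl | ⟨b, rfl⟩
    exacts [happex, hvertex b]⟩

@[simp]
theorem adj_apex_vertex (b : β) : (K₁⊙H).Adj (apex β) (vertex b) := rfl

@[simp]
theorem adj_vertex_apex (b : β) : (K₁⊙H).Adj (vertex b) (apex β) := rfl

@[simp]
theorem adj_vertex_vertex (b b' : β) : (K₁⊙H).Adj (vertex b) (vertex b') ↔ H.Adj b b' :=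
  ⟨And.right, And.intro rfl⟩

theorem trace_vertex_eq_iff (D : Set (Fin 1 ⊕ Fin 1 × β)) (b b' : β) :
    {x ∈ D | (K₁⊙H).Adj (vertex b) x} = {x ∈ D | (K₁⊙H).Adj (vertex b') x} ↔
      {y ∈ vertex ⁻¹' D | H.Adj b y} = {y ∈ vertex ⁻¹' D | H.Adj b' y} := by
  simp only [Set.ext_iff, forall_iff, Set.mem_ofPred_eq, Set.mem_preimage,
    adj_vertex_apex, adj_vertex_vertex, iff_self, true_and]

theorem isLocating_preimage_vertex {D : Set (Fin 1 ⊕ Fin 1 × β)}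
    (hD : IsLocating (K₁⊙H) D) :
    IsLocating H (vertex ⁻¹' D) := fun u hu v hv huv htrace =>
  hD _ hu _ hv (vertex_injective.ne huv) ((trace_vertex_eq_iff D u v).mpr htrace)

theorem isDominatingSet_preimage_vertex {D : Set (Fin 1 ⊕ Fin 1 × β)} (hapex : apex β ∉ D)
    (hD : IsDominatingSet (K₁⊙H) D) : IsDominatingSet H (vertex ⁻¹' D) := by
  intro b hb
  obtain ⟨x, hxD, hbx⟩ := hD (vertex b) hb
  rcases eq_apex_or_eq_vertex x with rfl | ⟨y, rfl⟩
  exacts [absurd hxD hapex, ⟨y, hxD, (adj_vertex_vertex b y).mp hbx⟩]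

theorem isLocatingDominating_insert_apex_image {B : Set β} (hB : IsLocating H B) :
    IsLocatingDominating (K₁⊙H) (insert (apex β) (vertex '' B)) := by
  have hpre : vertex ⁻¹' insert (apex β) (vertex '' B) = B := by
    ext b
    simp [vertex_injective.eq_iff]
  refine ⟨fun x hx => ⟨apex β, Set.mem_insert _ _, ?_⟩, ?_⟩
  · rcases eq_apex_or_eq_vertex x with rfl | ⟨b, rfl⟩
    exacts [absurd (Set.mem_insert _ _) hx, adj_vertex_apex b]
  · intro x hx y hy hxy htrace
    rcases eq_apex_or_eq_vertex x with rfl | ⟨b, rfl⟩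
    · exact hx (Set.mem_insert _ _)
    rcases eq_apex_or_eq_vertex y with rfl | ⟨b', rfl⟩
    · exact hy (Set.mem_insert _ _)
    rw [← hpre] at hB
    exact hB b hx b' hy (fun h => hxy (congrArg vertex h))
      ((trace_vertex_eq_iff _ b b').mp htrace)

theorem ncard_preimage_vertex_le [Finite β] (D : Set (Fin 1 ⊕ Fin 1 × β)) :
    (vertex ⁻¹' D).ncard ≤ D.ncard := by
  rw [← Set.ncard_image_of_injective _ vertex_injective]
  exact Set.ncard_le_ncard (Set.image_preimage_subset vertex D)

theorem ncard_preimage_vertex_add_one_le [Finite β] {D : Set (Fin 1 ⊕ Fin 1 × β)}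
    (hapex : apex β ∈ D) : (vertex ⁻¹' D).ncard + 1 ≤ D.ncard := by
  rw [← Set.ncard_image_of_injective _ vertex_injective,
    ← Set.ncard_insert_of_notMem (a := apex β) (by simp)]
  exact Set.ncard_le_ncard (Set.insert_subset hapex (Set.image_preimage_subset vertex D))

theorem not_isLocating_of_forall_adj {D : Set (Fin 1 ⊕ Fin 1 × β)} (hapex : apex β ∉ D)
    {u : β} (hu : vertex u ∉ D) (hadj : ∀ y ∈ vertex ⁻¹' D, H.Adj u y) :
    ¬ IsLocating (K₁⊙H) D := by
  intro hD
  refine hD (vertex u) hu (apex β) hapex (vertex_ne_apex u)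
    (Set.ext (forall_iff.mpr ⟨?_, ?_⟩))
  · simp [hapex]
  · intro y
    simp only [Set.mem_sep_iff, adj_vertex_vertex, adj_apex_vertex, and_true,
      and_iff_left_iff_imp]
    exact hadj y

variable (H) in
theorem locatingDominationNumber_le_add_one [Finite β] :
    locatingDominationNumber (K₁⊙H) ≤ locatingDominationNumber H + 1 := by
  obtain ⟨B, hB, hBcard⟩ := exists_isLocatingDominating_ncard_eq H
  calc locatingDominationNumber (K₁⊙H)
      ≤ (insert (apex β) (vertex '' B)).ncard :=
        locatingDominationNumber_le_ncard (isLocatingDominating_insert_apex_image hB.2)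
    _ = locatingDominationNumber H + 1 := by
        rw [Set.ncard_insert_of_notMem (by simp), Set.ncard_image_of_injective _ vertex_injective,
          hBcard]

end CoronaK₁

/-- Let `H` be a graph such that every locating-dominating set `B` of minimum
cardinality has a vertex `u ∉ B` with `N(u) ∩ B = B`. Then
`γ_{l-d}(K₁ ⊙ H) = γ_{l-d}(H) + 1`. -/
theorem stmt_12 {β : Type*} [Fintype β] (H : SimpleGraph β)
    (hB : ∀ B : Set β, IsLocatingDominating H B → B.ncard = locatingDominationNumber H →
      ∃ u ∉ B, {x ∈ B | H.Adj u x} = B) :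
    locatingDominationNumber (corona (⊥ : SimpleGraph (Fin 1)) H)
      = locatingDominationNumber H + 1 := by
  refine le_antisymm (CoronaK₁.locatingDominationNumber_le_add_one H) ?_
  obtain ⟨D, hD, hDcard⟩ :=
    exists_isLocatingDominating_ncard_eq (corona (⊥ : SimpleGraph (Fin 1)) H)
  rw [← hDcard]
  have hloc := CoronaK₁.isLocating_preimage_vertex hD.2
  by_cases hapex : CoronaK₁.apex β ∈ D
  · calc locatingDominationNumber H + 1
        ≤ (CoronaK₁.vertex ⁻¹' D).ncard + 1 :=
          Nat.add_le_add_right (locatingDominationNumber_le_ncard_of_isLocating hB hloc) 1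
      _ ≤ D.ncard := CoronaK₁.ncard_preimage_vertex_add_one_le hapex
  · have hld : IsLocatingDominating H (CoronaK₁.vertex ⁻¹' D) :=
      ⟨CoronaK₁.isDominatingSet_preimage_vertex hapex hD.1, hloc⟩
    by_contra! hlt
    have hmin := locatingDominationNumber_le_ncard hld
    have hle := CoronaK₁.ncard_preimage_vertex_le D
    obtain ⟨u, hu, hadj⟩ := hB _ hld (by omega)
    exact CoronaK₁.not_isLocating_of_forall_adj hapex hu
      (Set.sep_eq_self_iff_mem_true.mp hadj) hD.2
end
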